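/- Let F be a real 2-uniform (n,k)-frame with associated graph G_F. Then for every 1 ≤ m ≤ n, e_m^∞(F) ≤ k/n + (m−1)·c_{n,k}, and equality holds if and only if G_F contains an induced subgraph on m vertices that is complete bipartite. -/

import Mathlib

/-!
For `D = diagS S` one has `‖VᵀDV‖ = ‖VᵀD‖²`, and for `u = Dw`, which is supported on `S`,
`‖Vᵀu‖² = ⟨u, VVᵀu⟩ = (k/n)‖u‖² + c ⟨u, Qu⟩`. Since `Q` has zero diagonal and `±1` entries off it,
`(#S - 1)‖u‖² - ⟨u, Qu⟩ = ½ ∑_{i ≠ j ∈ S} (u_i - Q_ij u_j)²`. This gives the bound, and a norming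
vector of `VᵀD` for which it is attained satisfies `u_i = Q_ij u_j` on `S`. A nonzero vector
with this property exists exactly when the graph induced on `S` is complete bipartite, the two
parts being the sign classes of `u`.
-/

open Matrix
open scoped Classical

noncomputable section

namespace FramesErasures

/-- The constant `c_{n,k} = sqrt(k(n-k)/(n^2(n-1)))`. -/
noncomputable def c (n k : ℕ) : ℝ :=
  Real.sqrt ((k : ℝ) * ((n : ℝ) - k) / ((n : ℝ) ^ 2 * ((n : ℝ) - 1)))

/-- Operator norm (ℓ²→ℓ²) of a square real matrix. -/
noncomputable def opNorm {k : ℕ} (A : Matrix (Fin k) (Fin k) ℝ) : ℝ :=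
  ‖Matrix.toEuclideanCLM (𝕜 := ℝ) A‖

/-- The diagonal 0-1 matrix with 1's exactly at the positions in `S`. -/
def diagS {n : ℕ} (S : Finset (Fin n)) : Matrix (Fin n) (Fin n) ℝ :=
  Matrix.diagonal fun i => if i ∈ S then 1 else 0

/-- `e_m^∞(F)`: the maximal norm of an error operator for `m` erasures. -/
noncomputable def errInf {n k : ℕ} (V : Matrix (Fin n) (Fin k) ℝ) (m : ℕ) : ℝ :=
  sSup {x : ℝ | ∃ S : Finset (Fin n), S.card = m ∧ x = opNorm (Vᵀ * diagS S * V)}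

/-- `e_m^p(F)`: the ℓᵖ-average of the norms of the error operators for `m` erasures. -/
noncomputable def errP {n k : ℕ} (V : Matrix (Fin n) (Fin k) ℝ) (m : ℕ) (p : ℝ) : ℝ :=
  ((n.choose m : ℝ)⁻¹ *
      ∑ S ∈ Finset.univ.filter fun S : Finset (Fin n) => S.card = m,
        opNorm (Vᵀ * diagS S * V) ^ p) ^ (1 / p)

/-- A Parseval frame is uniform if all diagonal Grammian entries equal `k/n`. -/
def Uniform (n k : ℕ) (V : Matrix (Fin n) (Fin k) ℝ) : Prop :=
  ∀ j, (V * Vᵀ) j j = (k : ℝ) / n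

/-- 2-uniformity, via the equiangularity characterization. -/
def TwoUniform (n k : ℕ) (V : Matrix (Fin n) (Fin k) ℝ) : Prop :=
  Uniform n k V ∧ ∀ i j, i ≠ j → |(V * Vᵀ) i j| = c n k

/-- The `n×n` all-ones matrix. -/
def Jmat (n : ℕ) : Matrix (Fin n) (Fin n) ℝ :=
  Matrix.of fun _ _ => 1

/-- A real 2-uniform `(n,k)`-frame, given by its analysis operator and signature matrix. -/
structure TwoUniformFrame (n k : ℕ) where
  V : Matrix (Fin n) (Fin k) ℝ
  Q : Matrix (Fin n) (Fin n) ℝ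
  parseval : Vᵀ * V = 1
  symm : Qᵀ = Q
  diag : ∀ i, Q i i = 0
  offdiag : ∀ i j, i ≠ j → Q i j = 1 ∨ Q i j = -1
  gram : V * Vᵀ = ((k : ℝ) / n) • (1 : Matrix (Fin n) (Fin n) ℝ) + c n k • Q

/-- The graph associated with a 2-uniform frame: `i ≠ j` adjacent iff `Q i j = -1`. -/
def frameGraph {n k : ℕ} (F : TwoUniformFrame n k) : SimpleGraph (Fin n) where
  Adj i j := i ≠ j ∧ F.Q i j = -1
  symm := ⟨by
    intro i j h
    refine ⟨h.1.symm, ?_⟩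
    have h2 : F.Q i j = F.Q j i := by
      have := congrFun (congrFun F.symm j) i
      simpa [Matrix.transpose_apply] using this
    rw [← h2]
    exact h.2⟩
  loopless := ⟨fun i h => h.1 rfl⟩

/-- A graph is complete bipartite (with one part possibly empty). -/
def IsCompleteBipartite {α : Type*} (G : SimpleGraph α) : Prop :=
  ∃ A : Set α, ∀ i j, G.Adj i j ↔ ((i ∈ A) ↔ (j ∉ A))

/-- `G` has an induced complete bipartite subgraph on `m` vertices. -/
def HasInducedCompleteBipartite {n : ℕ} (G : SimpleGraph (Fin n)) (m : ℕ) : Prop :=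
  ∃ S : Finset (Fin n), S.card = m ∧
    IsCompleteBipartite (G.induce (S : Set (Fin n)))

/-- The Seidel adjacency matrix of a graph. -/
noncomputable def seidel {α : Type*} [DecidableEq α] (G : SimpleGraph α) : Matrix α α ℝ :=
  Matrix.of fun i j => if i = j then 0 else if G.Adj i j then -1 else 1

/-- Switching equivalence of graphs: Seidel matrices conjugate by a product of a permutation
and a `±1` diagonal matrix. -/
def SwitchingEquivalent {α : Type*} [DecidableEq α] (G H : SimpleGraph α) : Prop :=
  ∃ (σ : Equiv.Perm α) (ε : α → ℝ), (∀ i, ε i = 1 ∨ ε i = -1) ∧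
    ∀ i j, seidel H i j = ε i * ε j * seidel G (σ i) (σ j)

/-- `G ∈ 𝒢_m^(s)`: the minimal number of edges in the switching class of `G` equals `s`. -/
def MinSwitchEdges {α : Type*} [DecidableEq α] (G : SimpleGraph α) (s : ℕ) : Prop :=
  IsLeast {t : ℕ | ∃ H : SimpleGraph α, SwitchingEquivalent G H ∧ H.edgeSet.ncard = t} s

/-- `lam` is the largest eigenvalue of the real matrix `A`. -/
def IsMaxEigenvalue {m : ℕ} (A : Matrix (Fin m) (Fin m) ℝ) (lam : ℝ) : Prop :=
  (∃ v : Fin m → ℝ, v ≠ 0 ∧ A.mulVec v = lam • v) ∧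
  ∀ μ : ℝ, (∃ v : Fin m → ℝ, v ≠ 0 ∧ A.mulVec v = μ • v) → μ ≤ lam

/-- A 2-uniform frame is 3-uniform if the error norm is the same for all triple erasures. -/
def ThreeUniform {n k : ℕ} (F : TwoUniformFrame n k) : Prop :=
  ∀ S T : Finset (Fin n), S.card = 3 → T.card = 3 →
    opNorm (F.Vᵀ * diagS S * F.V) = opNorm (F.Vᵀ * diagS T * F.V)

open scoped Matrix.Norms.L2Operator

lemma exists_norm_eq_one_and_norm_apply_eq_opNorm {E F : Type*} [NormedAddCommGroup E]
    [NormedSpace ℝ E] [FiniteDimensional ℝ E] [Nontrivial E] [SeminormedAddCommGroup F]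
    [NormedSpace ℝ F] (f : E →L[ℝ] F) : ∃ x, ‖x‖ = 1 ∧ ‖f x‖ = ‖f‖ := by
  have hK := (isCompact_sphere (0 : E) 1).image (continuous_norm.comp f.continuous)
  obtain ⟨x, hx, hfx⟩ := hK.sSup_mem ((NormedSpace.sphere_nonempty.mpr zero_le_one).image _)
  exact ⟨x, mem_sphere_zero_iff_norm.mp hx, hfx.trans f.sSup_sphere_eq_norm⟩

lemma csSup_eq_iff_mem_of_finite {s : Set ℝ} {b : ℝ} (hfin : s.Finite) (hne : s.Nonempty)
    (hle : ∀ x ∈ s, x ≤ b) : sSup s = b ↔ b ∈ s :=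
  ⟨fun h => h ▸ hne.csSup_mem hfin, fun h => IsGreatest.csSup_eq ⟨h, hle⟩⟩

section L2OpNorm

variable {ι κ : Type*} [Fintype ι] [Fintype κ]

lemma norm_toLp_sq (w : ι → ℝ) : ‖(WithLp.toLp 2 w : EuclideanSpace ℝ ι)‖ ^ 2 = w ⬝ᵥ w := by
  rw [← real_inner_self_eq_norm_sq, EuclideanSpace.inner_toLp_toLp, star_trivial]

variable [DecidableEq ι]

lemma toEuclideanLin_trans_toContinuousLinearMap_apply_toLp (B : Matrix κ ι ℝ) (w : ι → ℝ) :
    (toEuclideanLin.trans LinearMap.toContinuousLinearMap B) (WithLp.toLp 2 w) =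
      WithLp.toLp 2 (B *ᵥ w) :=
  rfl

lemma dotProduct_mulVec_self_le_l2_opNorm_sq (B : Matrix κ ι ℝ) (w : ι → ℝ) :
    (B *ᵥ w) ⬝ᵥ (B *ᵥ w) ≤ ‖B‖ ^ 2 * (w ⬝ᵥ w) := by
  rw [← norm_toLp_sq, ← norm_toLp_sq, ← mul_pow]
  gcongr
  rw [l2_opNorm_def, ← toEuclideanLin_trans_toContinuousLinearMap_apply_toLp]
  exact ContinuousLinearMap.le_opNorm _ _

lemma l2_opNorm_sq_le {B : Matrix κ ι ℝ} {b : ℝ} (hb : 0 ≤ b)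
    (h : ∀ w, (B *ᵥ w) ⬝ᵥ (B *ᵥ w) ≤ b * (w ⬝ᵥ w)) : ‖B‖ ^ 2 ≤ b := by
  rw [← Real.le_sqrt (norm_nonneg B) hb, l2_opNorm_def]
  refine ContinuousLinearMap.opNorm_le_bound _ (Real.sqrt_nonneg b) fun x => ?_
  rw [← Real.sqrt_sq (norm_nonneg x), ← Real.sqrt_mul hb,
    Real.le_sqrt (norm_nonneg _) (by positivity), ← x.toLp_ofLp,
    toEuclideanLin_trans_toContinuousLinearMap_apply_toLp, norm_toLp_sq, norm_toLp_sq]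
  exact h x.ofLp

lemma exists_dotProduct_mulVec_self_eq_l2_opNorm_sq [Nonempty ι] (B : Matrix κ ι ℝ) :
    ∃ w, w ⬝ᵥ w = 1 ∧ (B *ᵥ w) ⬝ᵥ (B *ᵥ w) = ‖B‖ ^ 2 := by
  obtain ⟨x, hx, hBx⟩ := exists_norm_eq_one_and_norm_apply_eq_opNorm
    (toEuclideanLin.trans LinearMap.toContinuousLinearMap B)
  refine ⟨x.ofLp, ?_, ?_⟩
  · rw [← norm_toLp_sq, WithLp.toLp_ofLp, hx, one_pow]
  · rw [← norm_toLp_sq, l2_opNorm_def, ← hBx,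
      ← toEuclideanLin_trans_toContinuousLinearMap_apply_toLp, WithLp.toLp_ofLp]

end L2OpNorm

section DiagS

variable {n : ℕ} (S : Finset (Fin n))

lemma diagS_transpose : (diagS S)ᵀ = diagS S :=
  diagonal_transpose _

lemma diagS_mul_diagS : diagS S * diagS S = diagS S := by
  simp [diagS]

lemma diagS_mulVec_apply (w : Fin n → ℝ) (i : Fin n) :
    (diagS S *ᵥ w) i = if i ∈ S then w i else 0 := by
  simp [diagS, mulVec_diagonal]

lemma diagS_mulVec_eq_zero_of_notMem (w : Fin n → ℝ) {i : Fin n} (hi : i ∉ S) :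
    (diagS S *ᵥ w) i = 0 := by
  rw [diagS_mulVec_apply, if_neg hi]

lemma diagS_mulVec_of_eq_zero {u : Fin n → ℝ} (hu : ∀ i ∉ S, u i = 0) : diagS S *ᵥ u = u := by
  ext i
  rw [diagS_mulVec_apply]
  split_ifs with hi
  · rfl
  · exact (hu i hi).symm

lemma dotProduct_diagS_mulVec_self_le (w : Fin n → ℝ) :
    (diagS S *ᵥ w) ⬝ᵥ (diagS S *ᵥ w) ≤ w ⬝ᵥ w := by
  refine Finset.sum_le_sum fun i _ => ?_
  rw [diagS_mulVec_apply]
  split_ifs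
  · rfl
  · simpa using mul_self_nonneg (w i)

lemma opNorm_transpose_mul_diagS_mul {k : ℕ} (V : Matrix (Fin n) (Fin k) ℝ) :
    opNorm (Vᵀ * diagS S * V) = ‖Vᵀ * diagS S‖ ^ 2 := by
  have h : Vᵀ * diagS S * V = (Vᵀ * diagS S)ᴴᴴ * (Vᵀ * diagS S)ᴴ := by
    rw [conjTranspose_conjTranspose, conjTranspose_eq_transpose_of_trivial, transpose_mul,
      transpose_transpose, diagS_transpose, ← Matrix.mul_assoc (Vᵀ * diagS S),
      Matrix.mul_assoc Vᵀ (diagS S) (diagS S), diagS_mul_diagS]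
  rw [opNorm, l2_opNorm_toEuclideanCLM, h, l2_opNorm_conjTranspose_mul_self,
    l2_opNorm_conjTranspose, sq]

end DiagS

section SignatureForm

variable {ι : Type*} [Fintype ι] {Q : Matrix ι ι ℝ} {S : Finset ι} {u : ι → ℝ}

lemma dotProduct_self_eq_sum_of_eq_zero (hu : ∀ i ∉ S, u i = 0) :
    u ⬝ᵥ u = ∑ i ∈ S, u i ^ 2 := by
  rw [dotProduct, ← Finset.sum_subset (Finset.subset_univ S) fun i _ hi => by simp [hu i hi]]
  simp only [sq]

variable [DecidableEq ι]

lemma dotProduct_mulVec_eq_sum_erase (hdiag : ∀ i, Q i i = 0) (hu : ∀ i ∉ S, u i = 0) :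
    u ⬝ᵥ (Q *ᵥ u) = ∑ i ∈ S, ∑ j ∈ S.erase i, Q i j * u i * u j := by
  rw [dotProduct, ← Finset.sum_subset (Finset.subset_univ S) fun i _ hi => by simp [hu i hi]]
  refine Finset.sum_congr rfl fun i hi => ?_
  rw [mulVec, dotProduct, Finset.mul_sum,
    ← Finset.sum_subset (Finset.subset_univ S) fun j _ hj => by simp [hu j hj],
    ← Finset.add_sum_erase S _ hi, hdiag i, zero_mul, mul_zero, zero_add]
  exact Finset.sum_congr rfl fun j _ => by ring

lemma card_sub_one_mul_dotProduct_self_sub_dotProduct_mulVec (hdiag : ∀ i, Q i i = 0)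
    (hQ : ∀ i j, i ≠ j → Q i j = 1 ∨ Q i j = -1) (hu : ∀ i ∉ S, u i = 0) :
    ((S.card : ℝ) - 1) * (u ⬝ᵥ u) - u ⬝ᵥ (Q *ᵥ u) =
      (∑ i ∈ S, ∑ j ∈ S.erase i, (u i - Q i j * u j) ^ 2) / 2 := by
  have hsq : ∀ i ∈ S, ∀ j ∈ S.erase i,
      (u i - Q i j * u j) ^ 2 = u i ^ 2 + u j ^ 2 - 2 * (Q i j * u i * u j) := by
    intro i _ j hj
    have hQ2 : Q i j ^ 2 = 1 := by
      rcases hQ i j (Finset.ne_of_mem_erase hj).symm with h | h <;> simp [h]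
    linear_combination u j ^ 2 * hQ2
  have hsum : ∀ f : ι → ℝ, ∑ i ∈ S, ∑ j ∈ S.erase i, f j = ((S.card : ℝ) - 1) * ∑ i ∈ S, f i := by
    intro f
    rw [Finset.sum_congr rfl fun i hi => Finset.sum_erase_eq_sub hi, Finset.sum_sub_distrib,
      Finset.sum_const, nsmul_eq_mul]
    ring
  have hsum' : ∑ i ∈ S, ∑ j ∈ S.erase i, u i ^ 2 = ((S.card : ℝ) - 1) * ∑ i ∈ S, u i ^ 2 := by
    rw [Finset.sum_congr rfl fun i hi => Finset.sum_erase_eq_sub (f := fun _ => u i ^ 2) hi,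
      Finset.sum_sub_distrib]
    simp only [Finset.sum_const, nsmul_eq_mul, ← Finset.mul_sum]
    ring
  rw [dotProduct_self_eq_sum_of_eq_zero hu, dotProduct_mulVec_eq_sum_erase hdiag hu,
    Finset.sum_congr rfl fun i hi => Finset.sum_congr rfl (hsq i hi)]
  simp only [Finset.sum_sub_distrib, Finset.sum_add_distrib, ← Finset.mul_sum, hsum, hsum']
  ring

lemma dotProduct_mulVec_le_card_sub_one_mul (hdiag : ∀ i, Q i i = 0)
    (hQ : ∀ i j, i ≠ j → Q i j = 1 ∨ Q i j = -1) (hu : ∀ i ∉ S, u i = 0) :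
    u ⬝ᵥ (Q *ᵥ u) ≤ ((S.card : ℝ) - 1) * (u ⬝ᵥ u) := by
  have h := card_sub_one_mul_dotProduct_self_sub_dotProduct_mulVec hdiag hQ hu
  have : 0 ≤ ∑ i ∈ S, ∑ j ∈ S.erase i, (u i - Q i j * u j) ^ 2 := by positivity
  linarith

lemma dotProduct_mulVec_eq_card_sub_one_mul_iff (hdiag : ∀ i, Q i i = 0)
    (hQ : ∀ i j, i ≠ j → Q i j = 1 ∨ Q i j = -1) (hu : ∀ i ∉ S, u i = 0) :
    u ⬝ᵥ (Q *ᵥ u) = ((S.card : ℝ) - 1) * (u ⬝ᵥ u) ↔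
      ∀ i ∈ S, ∀ j ∈ S, i ≠ j → u i = Q i j * u j := by
  rw [eq_comm, ← sub_eq_zero, card_sub_one_mul_dotProduct_self_sub_dotProduct_mulVec hdiag hQ hu,
    div_eq_zero_iff, or_iff_left two_ne_zero,
    Finset.sum_eq_zero_iff_of_nonneg fun i _ => by positivity]
  refine forall₂_congr fun i _ => ?_
  rw [Finset.sum_eq_zero_iff_of_nonneg fun j _ => by positivity]
  simp only [Finset.mem_erase, pow_eq_zero_iff two_ne_zero, sub_eq_zero]
  exact ⟨fun h j hj hij => h j ⟨Ne.symm hij, hj⟩, fun h j hj => h j hj.2 (Ne.symm hj.1)⟩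

end SignatureForm

section FrameGraph

variable {n k : ℕ} (F : TwoUniformFrame n k) {S : Finset (Fin n)}

lemma isCompleteBipartite_induce_of_forall_eq_mul {u : Fin n → ℝ} (hu0 : u ≠ 0)
    (hu : ∀ i ∉ S, u i = 0) (hsw : ∀ i ∈ S, ∀ j ∈ S, i ≠ j → u i = F.Q i j * u j) :
    IsCompleteBipartite ((frameGraph F).induce (S : Set (Fin n))) := by
  obtain ⟨i₀, hi₀⟩ := Function.ne_iff.mp hu0
  have hi₀S : i₀ ∈ S := by
    by_contra h
    exact hi₀ (hu i₀ h)
  have hne : ∀ j ∈ S, u j ≠ 0 := by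
    intro j hj
    by_cases hji : j = i₀
    · exact hji ▸ hi₀
    · rw [hsw j hj i₀ hi₀S hji]
      rcases F.offdiag j i₀ hji with h | h <;> simpa [h] using hi₀
  refine ⟨{v | 0 < u v}, fun v w => ?_⟩
  change (v : Fin n) ≠ w ∧ F.Q v w = -1 ↔ (0 < u v ↔ ¬0 < u w)
  by_cases hvw : (v : Fin n) = w
  · rw [hvw]
    exact iff_of_false (fun h => h.1 rfl) iff_not_self
  · rw [hsw v v.2 w w.2 hvw]
    rcases F.offdiag v w hvw with h | h
    · rw [h, one_mul]
      exact iff_of_false (fun h' => absurd h'.2 (by norm_num)) iff_not_self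
    · rw [h, neg_one_mul, neg_pos]
      exact iff_of_true ⟨hvw, rfl⟩
        ⟨fun h' => not_lt.2 h'.le, fun h' => lt_of_le_of_ne (not_lt.1 h') (hne w w.2)⟩

lemma exists_forall_eq_mul_of_isCompleteBipartite_induce (hS : S.Nonempty)
    (h : IsCompleteBipartite ((frameGraph F).induce (S : Set (Fin n)))) :
    ∃ u : Fin n → ℝ, u ≠ 0 ∧ (∀ i ∉ S, u i = 0) ∧
      ∀ i ∈ S, ∀ j ∈ S, i ≠ j → u i = F.Q i j * u j := by
  obtain ⟨A, hA⟩ := h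
  let u : Fin n → ℝ := fun i =>
    if hi : i ∈ S then (if (⟨i, hi⟩ : (S : Set (Fin n))) ∈ A then -1 else 1) else 0
  refine ⟨u, fun h0 => ?_, fun i hi => dif_neg hi, fun i hi j hj hij => ?_⟩
  · obtain ⟨i, hi⟩ := hS
    have hui := congrFun h0 i
    simp only [u, dif_pos hi, Pi.zero_apply] at hui
    split_ifs at hui <;> norm_num at hui
  · have hadj := hA ⟨i, hi⟩ ⟨j, hj⟩
    change i ≠ j ∧ F.Q i j = -1 ↔ _ at hadj
    simp only [u, dif_pos hi, dif_pos hj]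
    rcases F.offdiag i j hij with hq | hq <;>
      by_cases hiA : (⟨i, hi⟩ : (S : Set (Fin n))) ∈ A <;>
      by_cases hjA : (⟨j, hj⟩ : (S : Set (Fin n))) ∈ A <;>
      simp [hq, hiA, hjA, hij] at hadj ⊢ <;> norm_num at hadj

lemma isCompleteBipartite_induce_iff (hS : S.Nonempty) :
    IsCompleteBipartite ((frameGraph F).induce (S : Set (Fin n))) ↔
      ∃ u : Fin n → ℝ, u ≠ 0 ∧ (∀ i ∉ S, u i = 0) ∧
        ∀ i ∈ S, ∀ j ∈ S, i ≠ j → u i = F.Q i j * u j :=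
  ⟨exists_forall_eq_mul_of_isCompleteBipartite_induce F hS,
    fun ⟨_, hu0, hu, hsw⟩ => isCompleteBipartite_induce_of_forall_eq_mul F hu0 hu hsw⟩

end FrameGraph

lemma c_nonneg (n k : ℕ) : 0 ≤ c n k :=
  Real.sqrt_nonneg _

lemma c_pos {n k : ℕ} (hk : 1 ≤ k) (hkn : k < n) : 0 < c n k := by
  have hk' : (1 : ℝ) ≤ k := by exact_mod_cast hk
  have hkn' : (k : ℝ) + 1 ≤ n := by exact_mod_cast hkn
  refine Real.sqrt_pos.mpr (div_pos (mul_pos ?_ ?_) (mul_pos ?_ ?_)) <;> nlinarith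

namespace TwoUniformFrame

variable {n k : ℕ} (F : TwoUniformFrame n k)

lemma dotProduct_transpose_mulVec_self (u : Fin n → ℝ) :
    (F.Vᵀ *ᵥ u) ⬝ᵥ (F.Vᵀ *ᵥ u) = k / n * (u ⬝ᵥ u) + c n k * (u ⬝ᵥ (F.Q *ᵥ u)) := by
  have h : (F.Vᵀ *ᵥ u) ⬝ᵥ (F.Vᵀ *ᵥ u) = u ⬝ᵥ ((F.V * F.Vᵀ) *ᵥ u) := by
    rw [← mulVec_mulVec, dotProduct_mulVec u F.V, ← mulVec_transpose]
  rw [h, F.gram, add_mulVec, smul_mulVec, smul_mulVec, one_mulVec, dotProduct_add,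
    dotProduct_smul, dotProduct_smul, smul_eq_mul, smul_eq_mul]

lemma opNorm_transpose_mul_diagS_mul_le {S : Finset (Fin n)} (hS : S.Nonempty) :
    opNorm (F.Vᵀ * diagS S * F.V) ≤ k / n + ((S.card : ℝ) - 1) * c n k := by
  have hm : (1 : ℝ) ≤ S.card := by exact_mod_cast hS.card_pos
  have hb : 0 ≤ (k : ℝ) / n + ((S.card : ℝ) - 1) * c n k :=
    add_nonneg (by positivity) (mul_nonneg (by linarith) (c_nonneg n k))
  rw [opNorm_transpose_mul_diagS_mul]
  refine l2_opNorm_sq_le hb fun w => ?_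
  set u := diagS S *ᵥ w
  have hQu : u ⬝ᵥ (F.Q *ᵥ u) ≤ ((S.card : ℝ) - 1) * (u ⬝ᵥ u) :=
    dotProduct_mulVec_le_card_sub_one_mul F.diag F.offdiag
      fun i => diagS_mulVec_eq_zero_of_notMem S w
  calc ((F.Vᵀ * diagS S) *ᵥ w) ⬝ᵥ ((F.Vᵀ * diagS S) *ᵥ w)
      = k / n * (u ⬝ᵥ u) + c n k * (u ⬝ᵥ (F.Q *ᵥ u)) := by
        rw [← mulVec_mulVec, F.dotProduct_transpose_mulVec_self]
    _ ≤ (k / n + ((S.card : ℝ) - 1) * c n k) * (u ⬝ᵥ u) := by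
        nlinarith [mul_le_mul_of_nonneg_left hQu (c_nonneg n k)]
    _ ≤ (k / n + ((S.card : ℝ) - 1) * c n k) * (w ⬝ᵥ w) :=
        mul_le_mul_of_nonneg_left (dotProduct_diagS_mulVec_self_le S w) hb

lemma opNorm_transpose_mul_diagS_mul_eq_iff (hk : 1 ≤ k) (hkn : k < n) {S : Finset (Fin n)}
    (hS : S.Nonempty) :
    opNorm (F.Vᵀ * diagS S * F.V) = k / n + ((S.card : ℝ) - 1) * c n k ↔
      IsCompleteBipartite ((frameGraph F).induce (S : Set (Fin n))) := by
  set b := (k : ℝ) / n + ((S.card : ℝ) - 1) * c n k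
  have hc := c_pos hk hkn
  have hm : (1 : ℝ) ≤ S.card := by exact_mod_cast hS.card_pos
  have hkn' : 0 < (k : ℝ) / n := div_pos (by exact_mod_cast hk) (Nat.cast_pos.2 (by omega))
  have hb : 0 < b := add_pos_of_pos_of_nonneg hkn' (mul_nonneg (by linarith) hc.le)
  rw [isCompleteBipartite_induce_iff F hS]
  constructor
  · intro h
    have : Nonempty (Fin n) := ⟨hS.choose⟩
    obtain ⟨w, hw1, hw⟩ := exists_dotProduct_mulVec_self_eq_l2_opNorm_sq (F.Vᵀ * diagS S)
    set u := diagS S *ᵥ w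
    have hu : ∀ i ∉ S, u i = 0 := fun i => diagS_mulVec_eq_zero_of_notMem S w
    have hQu := dotProduct_mulVec_le_card_sub_one_mul F.diag F.offdiag hu
    have hs : u ⬝ᵥ u ≤ 1 := hw1 ▸ dotProduct_diagS_mulVec_self_le S w
    have hkey : k / n * (u ⬝ᵥ u) + c n k * (u ⬝ᵥ (F.Q *ᵥ u)) = b := by
      rw [← F.dotProduct_transpose_mulVec_self, mulVec_mulVec, hw,
        ← opNorm_transpose_mul_diagS_mul, h]
    refine ⟨u, fun h0 => ?_, hu,
      (dotProduct_mulVec_eq_card_sub_one_mul_iff F.diag F.offdiag hu).1 ?_⟩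
    · simp only [h0, dotProduct_zero, mul_zero, mulVec_zero, add_zero] at hkey
      exact hb.ne hkey
    · refine le_antisymm hQu (le_of_mul_le_mul_left ?_ hc)
      nlinarith
  · rintro ⟨u, hu0, hu, hsw⟩
    refine le_antisymm (F.opNorm_transpose_mul_diagS_mul_le hS) ?_
    have hQu := (dotProduct_mulVec_eq_card_sub_one_mul_iff F.diag F.offdiag hu).2 hsw
    have hs : 0 < u ⬝ᵥ u := by simpa using dotProduct_star_self_pos_iff.2 hu0
    have h := dotProduct_mulVec_self_le_l2_opNorm_sq (F.Vᵀ * diagS S) u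
    rw [← mulVec_mulVec, diagS_mulVec_of_eq_zero S hu, F.dotProduct_transpose_mulVec_self, hQu,
      ← opNorm_transpose_mul_diagS_mul] at h
    exact le_of_mul_le_mul_right (by linarith) hs

end TwoUniformFrame

theorem statement6 (n k m : ℕ) (hk : 1 ≤ k) (hkn : k < n) (hm : 1 ≤ m) (hmn : m ≤ n)
    (F : TwoUniformFrame n k) :
    errInf F.V m ≤ (k : ℝ) / n + ((m : ℝ) - 1) * c n k ∧
    (errInf F.V m = (k : ℝ) / n + ((m : ℝ) - 1) * c n k ↔
      HasInducedCompleteBipartite (frameGraph F) m) := by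
  set E := {x : ℝ | ∃ S : Finset (Fin n), S.card = m ∧ x = opNorm (F.Vᵀ * diagS S * F.V)}
  have hE_le : ∀ x ∈ E, x ≤ (k : ℝ) / n + ((m : ℝ) - 1) * c n k := by
    rintro _ ⟨S, rfl, rfl⟩
    exact F.opNorm_transpose_mul_diagS_mul_le (Finset.card_pos.mp hm)
  have hE_ne : E.Nonempty := by
    obtain ⟨S, -, hS⟩ := Finset.exists_subset_card_eq (s := (Finset.univ : Finset (Fin n)))
      (by simpa using hmn)
    exact ⟨_, S, hS, rfl⟩
  have hE_fin : E.Finite :=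
    (Set.finite_range fun S => opNorm (F.Vᵀ * diagS S * F.V)).subset
      fun _ ⟨S, _, hx⟩ => ⟨S, hx.symm⟩
  refine ⟨csSup_le hE_ne hE_le, ?_⟩
  rw [errInf, csSup_eq_iff_mem_of_finite hE_fin hE_ne hE_le]
  refine exists_congr fun S => and_congr_right fun hS => ?_
  subst hS
  rw [eq_comm]
  exact F.opNorm_transpose_mul_diagS_mul_eq_iff hk hkn (Finset.card_pos.mp hm)

end FramesErasures
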